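/- arXiv:1212.4249 — 4 statements merged into one kernel-verified Lean document; each statement's English description precedes it below -/
import Mathlib

section
/- Let A = ⊕_{ν∈ℤ} A_ν be a ℤ-graded affine domain over a field k of characteristic zero and let η be a nonzero locally nilpotent derivation of A. Decompose η = η_1 + … + η_n into homogeneous components with strictly increasing degrees and η_n ≠ 0. Then the principal (highest-degree) homogeneous component η_n is again a locally nilpotent derivation of A. -/
def IsLND {R A : Type*} [CommRing R] [CommRing A] [Algebra R A]
    (D : Derivation R A A) : Prop :=
  ∀ a : A, ∃ n : ℕ, (D.toLinearMap ^ n) a = 0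

/-- the principal (highest-degree) homogeneous component `D` of a nonzero
locally nilpotent derivation `η` of a ℤ-graded affine domain is again locally nilpotent.
`D` is homogeneous of degree `n`, agrees on each homogeneous piece with the degree-`(ν+n)`
component of `η`, and all components of `η` of degree `> n` vanish. -/
theorem stmt4 {k A : Type*} [Field k] [CharZero k] [CommRing A] [IsDomain A]
    [Algebra k A] [Algebra.FiniteType k A]
    (𝒜 : ℤ → Submodule k A) [GradedAlgebra 𝒜]
    (η : Derivation k A A) (hη : IsLND η) (hne : η ≠ 0)
    (n : ℤ) (D : Derivation k A A)
    (hhom : ∀ ν : ℤ, ∀ a ∈ 𝒜 ν, D a ∈ 𝒜 (ν + n))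
    (htop : ∀ ν : ℤ, ∀ a ∈ 𝒜 ν, D a = (DirectSum.decompose 𝒜 (η a) (ν + n) : A))
    (hvan : ∀ m : ℤ, n < m → ∀ ν : ℤ, ∀ a ∈ 𝒜 ν,
      (DirectSum.decompose 𝒜 (η a) (ν + m) : A) = 0)
    (hD : D ≠ 0) :
    IsLND D := by
  classical
  -- components of η y live in degrees ≤ (degree of y) + n
  have hcomp : ∀ (j J : ℤ) (y : A), y ∈ 𝒜 j → j + n < J →
      (DirectSum.decompose 𝒜 (η y) J : A) = 0 := by
    intro j J y hy hJ
    have := hvan (J - j) (by omega) j y hy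
    rwa [show j + (J - j) = J by ring] at this
  have key : ∀ (ν : ℤ) (a : A), a ∈ 𝒜 ν → ∀ m : ℕ,
      (∀ J : ℤ, ν + m * n < J →
        (DirectSum.decompose 𝒜 ((η.toLinearMap ^ m) a) J : A) = 0) ∧
      (D.toLinearMap ^ m) a
        = (DirectSum.decompose 𝒜 ((η.toLinearMap ^ m) a) (ν + m * n) : A) := by
    intro ν a ha m
    induction m with
    | zero =>
      simp only [pow_zero, Module.End.one_apply]
      have h0 : (ν + (0 : ℕ) * n : ℤ) = ν := by push_cast; ring
      rw [h0]
      refine ⟨fun J hJ => DirectSum.decompose_of_mem_ne 𝒜 ha ?_, ?_⟩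
      · omega
      · exact (DirectSum.decompose_of_mem_same 𝒜 ha).symm
    | succ m ih =>
      obtain ⟨ih1, ih2⟩ := ih
      set x := (η.toLinearMap ^ m) a with hx
      have hxs : x = ∑ j ∈ (DirectSum.decompose 𝒜 x).support,
          (DirectSum.decompose 𝒜 x j : A) := (DirectSum.sum_support_decompose 𝒜 x).symm
      have hpow : (η.toLinearMap ^ (m + 1)) a = η x := by
        rw [pow_succ', Module.End.mul_apply]; rfl
      have hsum : ∀ J : ℤ, (DirectSum.decompose 𝒜 (η x) J : A)
          = ∑ j ∈ (DirectSum.decompose 𝒜 x).support,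
            (DirectSum.decompose 𝒜 (η (DirectSum.decompose 𝒜 x j : A)) J : A) := by
        intro J
        conv_lhs => rw [hxs]
        rw [show (η (∑ j ∈ (DirectSum.decompose 𝒜 x).support,
            (DirectSum.decompose 𝒜 x j : A))) = ∑ j ∈ (DirectSum.decompose 𝒜 x).support,
            η (DirectSum.decompose 𝒜 x j : A) from map_sum η.toLinearMap _ _]
        simp only [← GradedRing.proj_apply]
        exact map_sum (GradedRing.proj 𝒜 J) _ _
      constructor
      · intro J hJ
        rw [hpow, hsum]
        apply Finset.sum_eq_zero
        intro j hj
        by_cases hjle : j ≤ ν + m * n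
        · exact hcomp j J _ (SetLike.coe_mem _) (by push_cast at hJ ⊢; linarith)
        · rw [ih1 j (by omega), map_zero]
          simp
      · have hmem : (DirectSum.decompose 𝒜 x (ν + m * n) : A) ∈ 𝒜 (ν + m * n) :=
          SetLike.coe_mem _
        have hDstep : (D.toLinearMap ^ (m + 1)) a
            = D (DirectSum.decompose 𝒜 x (ν + m * n) : A) := by
          rw [pow_succ', Module.End.mul_apply, ih2]; rfl
        rw [hDstep, htop _ _ hmem,
          show (ν + ((m : ℕ) + 1 : ℕ) * n : ℤ) = ν + (m : ℕ) * n + n by push_cast; ring,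
          hpow, hsum]
        rw [Finset.sum_eq_single (ν + m * n)]
        · intro j hj hjne
          by_cases hjle : j ≤ ν + m * n
          · exact hcomp j _ _ (SetLike.coe_mem _)
              (by have := lt_of_le_of_ne hjle hjne; linarith)
          · rw [ih1 j (by omega), map_zero]; simp
        · intro hns
          rw [DFinsupp.notMem_support_iff.mp hns]
          simp
  -- now local nilpotency
  intro a
  have hhomLND : ∀ j : ℤ, ∃ m : ℕ,
      (D.toLinearMap ^ m) (DirectSum.decompose 𝒜 a j : A) = 0 := by
    intro j
    obtain ⟨m, hm⟩ := hη (DirectSum.decompose 𝒜 a j : A)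
    refine ⟨m, ?_⟩
    rw [(key j _ (SetLike.coe_mem _) m).2, hm]
    simp
  choose f hf using hhomLND
  set s := (DirectSum.decompose 𝒜 a).support with hs
  refine ⟨s.sup f, ?_⟩
  conv_lhs => rw [show a = ∑ j ∈ s, (DirectSum.decompose 𝒜 a j : A) from
    (DirectSum.sum_support_decompose 𝒜 a).symm]
  rw [map_sum]
  apply Finset.sum_eq_zero
  intro j hj
  have hle : f j ≤ s.sup f := Finset.le_sup hj
  obtain ⟨c, hc⟩ := Nat.exists_eq_add_of_le hle
  rw [hc, add_comm, pow_add, Module.End.mul_apply, hf j, map_zero]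
end

section
/- Let A = ⊕_{ν≥0} A_ν be a positively graded affine domain over k with e(A)=1. If ∂ is a nonzero homogeneous locally nilpotent derivation of A of degree −d, then gcd(d, e(A^∂)) = 1, where A^∂ = ker ∂ and e(R) denotes the gcd of the degrees ν with R_ν ≠ 0. -/
/-- for a positively graded affine domain `A` with saturation index `e(A) = 1`
(formalized: the subgroup of ℤ generated by the support of the grading is all of ℤ) and a
nonzero homogeneous locally nilpotent derivation `∂` of degree `−d`, one has
`gcd(d, e(A^∂)) = 1` (formalized: `{d}` together with the support of the graded kernel
`A^∂` generates all of ℤ). -/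
theorem stmt5 {k A : Type*} [Field k] [CharZero k] [CommRing A] [IsDomain A]
    [Algebra k A] [Algebra.FiniteType k A]
    (𝒜 : ℤ → Submodule k A) [GradedAlgebra 𝒜]
    (hpos : ∀ ν : ℤ, ν < 0 → 𝒜 ν = ⊥)
    (hsat : AddSubgroup.closure {ν : ℤ | 𝒜 ν ≠ ⊥} = ⊤)
    (D : Derivation k A A) (hD : IsLND D) (hne : D ≠ 0)
    (d : ℤ) (hhom : ∀ ν : ℤ, ∀ a ∈ 𝒜 ν, D a ∈ 𝒜 (ν - d)) :
    AddSubgroup.closure ({d} ∪ {ν : ℤ | ∃ a ∈ 𝒜 ν, a ≠ 0 ∧ D a = 0}) = ⊤ := by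
  classical
  rw [eq_top_iff, ← hsat, AddSubgroup.closure_le]
  intro ν hν
  simp only [Set.mem_setOf_eq] at hν
  obtain ⟨a, ha, hane⟩ : ∃ a ∈ 𝒜 ν, a ≠ 0 := by
    by_contra h
    push_neg at h
    apply hν
    ext x
    simp only [Submodule.mem_bot]
    constructor
    · intro hx
      by_contra hx0
      exact hx0 (h x hx)
    · rintro rfl; exact (𝒜 ν).zero_mem
  obtain ⟨n, hn⟩ := hD a
  have hex : ∃ r, (D.toLinearMap ^ r) a = 0 := ⟨n, hn⟩
  set r := Nat.find hex with hrdef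
  have hr0 : (D.toLinearMap ^ r) a = 0 := Nat.find_spec hex
  have hrpos : r ≠ 0 := by
    intro h
    rw [h, pow_zero] at hr0
    exact hane hr0
  obtain ⟨s, hs⟩ := Nat.exists_eq_succ_of_ne_zero hrpos
  have hsne : (D.toLinearMap ^ s) a ≠ 0 := Nat.find_min hex (by omega)
  have hmem : ∀ m : ℕ, (D.toLinearMap ^ m) a ∈ 𝒜 (ν - m • d) := by
    intro m
    induction m with
    | zero => simpa using ha
    | succ m ih =>
      have h2 : D ((D.toLinearMap ^ m) a) ∈ 𝒜 (ν - m • d - d) := hhom _ _ ih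
      have heq : ν - (m + 1 : ℕ) • d = ν - m • d - d := by
        push_cast [add_smul]
        ring
      rw [heq, pow_succ', Module.End.mul_apply]
      exact h2
  have hDzero : D ((D.toLinearMap ^ s) a) = 0 := by
    have : (D.toLinearMap ^ (s + 1)) a = 0 := by rw [← Nat.succ_eq_add_one, ← hs]; exact hr0
    rwa [pow_succ', Module.End.mul_apply] at this
  have hSd : d ∈ AddSubgroup.closure ({d} ∪ {ν : ℤ | ∃ a ∈ 𝒜 ν, a ≠ 0 ∧ D a = 0}) :=
    AddSubgroup.subset_closure (Or.inl rfl)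
  have hSν : ν - s • d ∈ AddSubgroup.closure ({d} ∪ {ν : ℤ | ∃ a ∈ 𝒜 ν, a ≠ 0 ∧ D a = 0}) :=
    AddSubgroup.subset_closure (Or.inr ⟨(D.toLinearMap ^ s) a, hmem s, hsne, hDzero⟩)
  have : ν - s • d + s • d = ν := by ring
  rw [← this]
  exact AddSubgroup.add_mem _ hSν (AddSubgroup.nsmul_mem _ hSd s)
end

section
/- Let A = ⊕_{ν≥0} A_ν be a positively graded affine domain over k, let h ∈ A_m be homogeneous of degree m > 0, and let F = A/(h−1). Then the natural projection ρ : A → F extends to A_h (by ρ(a/h^l) = ρ(a)) and restricts to a ring isomorphism from the degree-zero part A_{(h)} of A_h onto the degree-[0] component F_{[0]} of the ℤ/mℤ-grading of F induced by the action of the group μ_m of m-th roots of unity. -/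
def HomogLoc {k A : Type*} [CommRing k] [CommRing A] [Algebra k A]
    (𝒜 : ℤ → Submodule k A) (w : A) (Dg : ℤ) (n : ℤ) (x : Localization.Away w) : Prop :=
  ∃ (m : ℕ) (c : A), c ∈ 𝒜 (n + m * Dg) ∧
    x * algebraMap A (Localization.Away w) (w ^ m) = algebraMap A (Localization.Away w) c

/-!
The projection `A → A/(h - 1)` sends `h` to `1`, so it extends to `A_h` with `a / h ^ l ↦ a`.
An element `a ∈ A_{tm}` is then the image of the degree-zero fraction `a / h ^ t`. Conversely,
two degree-zero fractions `c / h ^ p`, `d / h ^ q` with the same image give the homogeneous element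
`h ^ q c - h ^ p d` of `(h - 1)`, and `(h - 1)` contains no nonzero homogeneous element: in
`g (h - 1)` the top component of `g` times `h` and the bottom component of `g` survive, in two
different degrees.
-/

open DirectSum

section GradedKernel

variable {k A : Type*} [CommRing k] [CommRing A] [Algebra k A]
  (𝒜 : ℤ → Submodule k A) [GradedAlgebra 𝒜]

theorem DirectSum.coe_decompose_mul_of_right_mem_sub {h : A} {m : ℤ} (hh : h ∈ 𝒜 m) (g : A)
    (d : ℤ) : (decompose 𝒜 (g * h) d : A) = decompose 𝒜 g (d - m) * h := by
  have := coe_decompose_mul_add_of_right_mem 𝒜 (a := g) (i := d - m) hh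
  rwa [sub_add_cancel] at this

theorem eq_zero_of_mem_graded_of_mem_span_sub_one [IsDomain A] {m : ℤ} (hm : 0 < m) {h : A}
    (hh : h ∈ 𝒜 m) (h0 : h ≠ 0) {ν : ℤ} {a : A} (ha : a ∈ 𝒜 ν)
    (hI : a ∈ Ideal.span {h - 1}) : a = 0 := by
  classical
  obtain ⟨g, rfl⟩ := Ideal.mem_span_singleton'.mp hI
  by_contra ha0
  have hg : decompose 𝒜 g ≠ 0 := fun hg ↦ ha0 <| by
    rw [(decompose 𝒜).injective (hg.trans (decompose_zero 𝒜).symm), zero_mul]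
  set s := (decompose 𝒜 g).support
  have hs : s.Nonempty := Finset.nonempty_iff_ne_empty.mpr (mt DFinsupp.support_eq_empty.mp hg)
  have outside : ∀ d ∉ s, (decompose 𝒜 g d : A) = 0 := fun d hd ↦ by simpa [s] using hd
  have inside : ∀ d ∈ s, (decompose 𝒜 g d : A) ≠ 0 := fun d hd ↦ by simpa [s] using hd
  have comp_mul_sub_one : ∀ d, (decompose 𝒜 (g * (h - 1)) d : A) =
      decompose 𝒜 g (d - m) * h - decompose 𝒜 g d := by
    intro d
    rw [mul_sub, mul_one, decompose_sub, DirectSum.sub_apply, Submodule.coe_sub,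
      coe_decompose_mul_of_right_mem_sub 𝒜 hh]
  have deg_eq : ∀ d, (decompose 𝒜 (g * (h - 1)) d : A) ≠ 0 → d = ν := fun d hd ↦ by
    by_contra hne
    exact hd (decompose_of_mem_ne 𝒜 ha (Ne.symm hne))
  have top : s.max' hs + m = ν := by
    refine deg_eq _ ?_
    have hout : s.max' hs + m ∉ s := fun hmem ↦ by linarith [s.le_max' _ hmem]
    rw [comp_mul_sub_one, add_sub_cancel_right, outside _ hout, sub_zero]
    exact mul_ne_zero (inside _ (s.max'_mem hs)) h0
  have bot : s.min' hs = ν := by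
    refine deg_eq _ ?_
    have hout : s.min' hs - m ∉ s := fun hmem ↦ by linarith [s.min'_le _ hmem]
    rw [comp_mul_sub_one, outside _ hout, zero_mul, zero_sub, neg_ne_zero]
    exact inside _ (s.min'_mem hs)
  linarith [s.min'_le _ (s.max'_mem hs)]

end GradedKernel

section QuotientLift

variable (k : Type*) {A : Type*} [CommSemiring k] [CommRing A] [Algebra k A] (h : A)

theorem Ideal.Quotient.mk_span_sub_one_self : Ideal.Quotient.mk (Ideal.span {h - 1}) h = 1 := by
  rw [← map_one (Ideal.Quotient.mk _), Ideal.Quotient.eq]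
  exact Ideal.mem_span_singleton_self _

noncomputable def awayLiftQuotientSubOne : Localization.Away h →ₐ[k] A ⧸ Ideal.span {h - 1} :=
  IsLocalization.Away.liftAlgHom (f := Ideal.Quotient.mkₐ k (Ideal.span {h - 1})) h <| by
    simp [Ideal.Quotient.mk_span_sub_one_self]

variable {h}

theorem awayLiftQuotientSubOne_algebraMap (a : A) :
    awayLiftQuotientSubOne k h (algebraMap A _ a) = Ideal.Quotient.mk _ a := by
  simp [awayLiftQuotientSubOne]

theorem awayLiftQuotientSubOne_eq_of_mul_eq {x : Localization.Away h} {p : ℕ} {c : A}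
    (hx : x * algebraMap A _ (h ^ p) = algebraMap A _ c) :
    awayLiftQuotientSubOne k h x = Ideal.Quotient.mk _ c := by
  simpa [awayLiftQuotientSubOne_algebraMap, Ideal.Quotient.mk_span_sub_one_self]
    using congrArg (awayLiftQuotientSubOne k h) hx

end QuotientLift

section DegreeZero

variable {k A : Type*} [CommRing k] [CommRing A] [Algebra k A]
  (𝒜 : ℤ → Submodule k A) [SetLike.GradedMonoid 𝒜]

def homogLocSubmodule {h : A} {D : ℤ} (hh : h ∈ 𝒜 D) (n : ℤ) :
    Submodule k (Localization.Away h) where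
  carrier := {x | HomogLoc 𝒜 h D n x}
  zero_mem' := ⟨0, 0, zero_mem _, by simp⟩
  add_mem' := by
    rintro x y ⟨p, c, hc, hx⟩ ⟨q, d, hd, hy⟩
    refine ⟨p + q, c * h ^ q + d * h ^ p, add_mem ?_ ?_, ?_⟩
    · convert SetLike.mul_mem_graded hc (SetLike.pow_mem_graded q hh) using 2
      push_cast [nsmul_eq_mul]; ring
    · convert SetLike.mul_mem_graded hd (SetLike.pow_mem_graded p hh) using 2
      push_cast [nsmul_eq_mul]; ring
    · simp only [pow_add, map_add, map_mul, ← hx, ← hy]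
      ring
  smul_mem' := by
    rintro r x ⟨p, c, hc, hx⟩
    exact ⟨p, r • c, Submodule.smul_mem _ r hc, by
      rw [smul_mul_assoc, hx]; exact (algebraMap.coe_smul r c _).symm⟩

end DegreeZero

section DegreeZeroIso

variable {k A : Type*} [CommRing k] [CommRing A] [Algebra k A]
  (𝒜 : ℤ → Submodule k A) [GradedAlgebra 𝒜]

theorem injOn_awayLiftQuotientSubOne [IsDomain A] {m : ℤ} (hm : 0 < m) {h : A}
    (hh : h ∈ 𝒜 m) : Set.InjOn (awayLiftQuotientSubOne k h) {x | HomogLoc 𝒜 h m 0 x} := by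
  rcases eq_or_ne h 0 with rfl | h0
  · have : Subsingleton (Localization.Away (0 : A)) :=
      IsLocalization.subsingleton (M := Submonoid.powers (0 : A)) ⟨1, pow_one 0⟩
    exact Set.injOn_of_subsingleton _ _
  rintro x ⟨p, c, hc, hx⟩ y ⟨q, d, hd, hy⟩ hxy
  rw [awayLiftQuotientSubOne_eq_of_mul_eq k hx, awayLiftQuotientSubOne_eq_of_mul_eq k hy] at hxy
  have hI : h ^ q * c - h ^ p * d ∈ Ideal.span {h - 1} := by
    rw [← Ideal.Quotient.eq]
    simp [Ideal.Quotient.mk_span_sub_one_self, hxy]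
  have hdeg {r s : ℕ} {e : A} (he : e ∈ 𝒜 (0 + r * m)) :
      h ^ s * e ∈ 𝒜 ((s + r) * m) := by
    convert SetLike.mul_mem_graded (SetLike.pow_mem_graded s hh) he using 2
    push_cast [nsmul_eq_mul]; ring
  have heq : h ^ q * c = h ^ p * d := sub_eq_zero.mp <|
    eq_zero_of_mem_graded_of_mem_span_sub_one 𝒜 hm hh h0
      (sub_mem (hdeg hc) (by rw [add_comm]; exact hdeg hd)) hI
  rw [(IsLocalization.eq_mk'_iff_mul_eq (y := (⟨h ^ p, p, rfl⟩ : Submonoid.powers h))).mpr hx,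
    (IsLocalization.eq_mk'_iff_mul_eq (y := (⟨h ^ q, q, rfl⟩ : Submonoid.powers h))).mpr hy,
    IsLocalization.mk'_eq_iff_eq]
  exact congrArg _ heq

theorem map_awayLiftQuotientSubOne_homogLocSubmodule_zero {m : ℕ} {h : A} (hh : h ∈ 𝒜 m) :
    (homogLocSubmodule 𝒜 hh 0).map (awayLiftQuotientSubOne k h).toLinearMap =
      Submodule.span k (Ideal.Quotient.mk (Ideal.span {h - 1}) ''
        {a | ∃ ν : ℤ, (ν : ZMod m) = 0 ∧ a ∈ 𝒜 ν}) := by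
  apply le_antisymm
  · rintro _ ⟨x, ⟨p, c, hc, hx⟩, rfl⟩
    rw [AlgHom.toLinearMap_apply, awayLiftQuotientSubOne_eq_of_mul_eq k hx]
    exact Submodule.subset_span ⟨c, ⟨0 + p * m, by simp, hc⟩, rfl⟩
  · rw [Submodule.span_le]
    rintro _ ⟨a, ⟨ν, hν, ha⟩, rfl⟩
    obtain ⟨t, rfl⟩ := (ZMod.intCast_zmod_eq_zero_iff_dvd ν m).mp hν
    -- `a / h ^ t`, written as `a * h ^ t⁻ / h ^ t⁺` since `t` may be negative
    set c := a * h ^ (-t).toNat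
    have hc : c ∈ 𝒜 (0 + t.toNat * m) := by
      convert SetLike.mul_mem_graded ha (SetLike.pow_mem_graded (-t).toNat hh) using 2
      rw [nsmul_eq_mul]
      linear_combination (m : ℤ) * t.toNat_sub_toNat_neg
    have hx := IsLocalization.mk'_spec (Localization.Away h) c
      (⟨h ^ t.toNat, t.toNat, rfl⟩ : Submonoid.powers h)
    refine ⟨_, ⟨t.toNat, c, hc, hx⟩, ?_⟩
    rw [AlgHom.toLinearMap_apply, awayLiftQuotientSubOne_eq_of_mul_eq k hx]
    simp [c, Ideal.Quotient.mk_span_sub_one_self]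

end DegreeZeroIso

theorem stmt7_general {k A : Type*} [Field k]
    [CommRing A] [IsDomain A] [Algebra k A]
    (𝒜 : ℤ → Submodule k A) [GradedAlgebra 𝒜]
    (m : ℕ) (hm : 0 < m) (h : A) (hh : h ∈ 𝒜 (m : ℤ)) :
    ∃ ρ' : Localization.Away h →+* (A ⧸ Ideal.span {h - 1}),
      (∀ a : A, ρ' (algebraMap A (Localization.Away h) a)
          = Ideal.Quotient.mk (Ideal.span {h - 1}) a) ∧
      Set.InjOn ρ' {x | HomogLoc 𝒜 h (m : ℤ) 0 x} ∧
      ρ' '' {x | HomogLoc 𝒜 h (m : ℤ) 0 x}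
        = ↑(Submodule.span k ((Ideal.Quotient.mk (Ideal.span {h - 1})) ''
            {a : A | ∃ ν : ℤ, ((ν : ZMod m) = 0) ∧ a ∈ 𝒜 ν})) := by
  refine ⟨awayLiftQuotientSubOne k h, awayLiftQuotientSubOne_algebraMap k,
    injOn_awayLiftQuotientSubOne 𝒜 (Int.natCast_pos.mpr hm) hh, ?_⟩
  rw [← map_awayLiftQuotientSubOne_homogLocSubmodule_zero 𝒜 hh, Submodule.map_coe]
  rfl

/-- for `h ∈ A_m` (`m > 0`) and `F = A/(h−1)`, the projection `ρ : A → F`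
extends to a ring homomorphism `ρ' : A_h → F`, which is injective on the degree-zero part
`A_{(h)}` and maps it onto the component `F_{[0]}` of the `ℤ/mℤ`-grading of `F`
(the span of images of homogeneous elements whose degree is `≡ 0 (mod m)`). -/
theorem stmt7 {k A : Type*} [Field k] [IsAlgClosed k] [CharZero k]
    [CommRing A] [IsDomain A] [Algebra k A] [Algebra.FiniteType k A]
    (𝒜 : ℤ → Submodule k A) [GradedAlgebra 𝒜]
    (hpos : ∀ ν : ℤ, ν < 0 → 𝒜 ν = ⊥)
    (m : ℕ) (hm : 0 < m) (h : A) (hh : h ∈ 𝒜 (m : ℤ)) :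
    ∃ ρ' : Localization.Away h →+* (A ⧸ Ideal.span {h - 1}),
      (∀ a : A, ρ' (algebraMap A (Localization.Away h) a)
          = Ideal.Quotient.mk (Ideal.span {h - 1}) a) ∧
      Set.InjOn ρ' {x | HomogLoc 𝒜 h (m : ℤ) 0 x} ∧
      ρ' '' {x | HomogLoc 𝒜 h (m : ℤ) 0 x}
        = ↑(Submodule.span k ((Ideal.Quotient.mk (Ideal.span {h - 1})) ''
            {a : A | ∃ ν : ℤ, ((ν : ZMod m) = 0) ∧ a ∈ 𝒜 ν})) :=
  stmt7_general 𝒜 m hm h hh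
end

section
/- Let A = ⊕_{ν≥0} A_ν be a positively graded finitely generated algebra over A_0. Then there exists d > 0 such that the Veronese subring A^{(d)} is generated over A_0 by its piece A_d, i.e., A^{(d)} = A_0[A_d]. -/
/-!
Split the generators into homogeneous components; they have degrees `≤ D` for some `D`, so every
element of `A_{dν}` is a linear combination of products of homogeneous elements of degrees `≤ D`
and total degree `dν`. For `d = (D + 1)!` such a product can be regrouped into `ν` subproducts of
degree exactly `d`: by pigeonhole, once the total degree is at least `(D + 1)!`, some degree
`v ∈ [1, D]` occurs often enough to give a subproduct of degree `D!`, because `v ∣ D!`, and `D + 1`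
of these make up degree `d`.
-/

open Finset Nat

namespace Finset

variable {ι : Type*} {s : Finset ι} {e : ι → ℕ} {D : ℕ}

theorem exists_subset_sum_eq_factorial (he : ∀ i ∈ s, e i ≤ D) (hs : (D + 1)! ≤ ∑ i ∈ s, e i) :
    ∃ t ⊆ s, ∑ i ∈ t, e i = D ! := by
  obtain ⟨v, hvD, hv⟩ := exists_le_sum_fiber_of_maps_to_of_nsmul_le_sum (b := D !)
    (fun i hi => mem_range.2 (lt_succ_of_le (he i hi))) ⟨0, by simp⟩
    (by rwa [card_range, smul_eq_mul, ← factorial_succ])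
  rw [sum_congr rfl fun i hi => (mem_filter.1 hi).2, sum_const, smul_eq_mul] at hv
  have hv0 : 0 < v := Nat.pos_of_ne_zero fun h => by simp [h, (factorial_pos D).ne'] at hv
  have hdvd : v ∣ D ! := dvd_factorial hv0 (Nat.lt_succ_iff.1 (mem_range.1 hvD))
  obtain ⟨t, hts, ht⟩ := exists_subset_card_eq (s := s.filter (e · = v)) (n := D ! / v)
    (Nat.div_le_of_le_mul (by rwa [mul_comm]))
  refine ⟨t, hts.trans (filter_subset _ _), ?_⟩
  rw [sum_congr rfl fun i hi => (mem_filter.1 (hts hi)).2, sum_const, ht, smul_eq_mul,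
    Nat.div_mul_cancel hdvd]

theorem exists_subset_sum_eq_mul_factorial [DecidableEq ι] (he : ∀ i ∈ s, e i ≤ D) (k : ℕ)
    (hs : k * D ! + (D + 1)! ≤ ∑ i ∈ s, e i) : ∃ t ⊆ s, ∑ i ∈ t, e i = k * D ! := by
  induction k generalizing s with
  | zero => exact ⟨∅, empty_subset _, by simp⟩
  | succ k ih =>
    obtain ⟨t, hts, ht⟩ := exists_subset_sum_eq_factorial he (by rw [succ_mul] at hs; omega)
    have hsplit := sum_sdiff hts (f := e)
    obtain ⟨u, hu, hu'⟩ := ih (s := s \ t) (fun i hi => he i (sdiff_subset hi))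
      (by rw [succ_mul] at hs; omega)
    refine ⟨u ∪ t, union_subset (hu.trans sdiff_subset) hts, ?_⟩
    rw [sum_union (disjoint_of_subset_left hu sdiff_disjoint), hu', ht, succ_mul]

end Finset

theorem Submonoid.exists_fin_prod_eq_of_mem_closure_iUnion {M κ : Type*} [CommMonoid M]
    {S : κ → Set M} {w : M} (hw : w ∈ Submonoid.closure (⋃ i, S i)) :
    ∃ (n : ℕ) (g : Fin n → M) (e : Fin n → κ), (∀ k, g k ∈ S (e k)) ∧ ∏ k, g k = w := by
  obtain ⟨l, hl, rfl⟩ := Submonoid.exists_list_of_mem_closure hw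
  choose e he using fun k : Fin l.length => Set.mem_iUnion.1 (hl _ (List.getElem_mem k.2))
  exact ⟨l.length, fun k => l[k.1], e, he, Fin.prod_univ_getElem l⟩

namespace GradedAlgebra

variable {R A : Type*} [CommRing R] [CommRing A] [Algebra R A] (𝒜 : ℕ → Submodule R A)
  [GradedAlgebra 𝒜]

theorem exists_adjoin_iUnion_le_eq_top {s : Finset A}
    (hs : Algebra.adjoin R ((𝒜 0 : Set A) ∪ ↑s) = ⊤) :
    ∃ D, Algebra.adjoin R (⋃ i ≤ D, (𝒜 i : Set A)) = ⊤ := by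
  classical
  let D := s.sup fun x => (DirectSum.decompose 𝒜 x).support.sup id
  refine ⟨D, top_le_iff.1 (hs ▸ Algebra.adjoin_le (Set.union_subset ?_ ?_))⟩
  · exact fun a ha => Algebra.subset_adjoin (Set.mem_iUnion₂.2 ⟨0, zero_le D, ha⟩)
  · intro x hx
    rw [SetLike.mem_coe, ← DirectSum.sum_support_decompose 𝒜 x]
    refine sum_mem fun i hi => Algebra.subset_adjoin (Set.mem_iUnion₂.2 ⟨i, ?_, SetLike.coe_mem _⟩)
    exact (le_sup (f := id) hi).trans
      (le_sup (f := fun x => (DirectSum.decompose 𝒜 x).support.sup id) hx)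

theorem prod_mem_adjoin_zero_union_factorial {ι : Type*} [DecidableEq ι] {D ν : ℕ}
    {s : Finset ι} {g : ι → A} {e : ι → ℕ} (hg : ∀ i ∈ s, g i ∈ 𝒜 (e i))
    (he : ∀ i ∈ s, e i ≤ D) (hs : ∑ i ∈ s, e i = (D + 1)! * ν) :
    ∏ i ∈ s, g i ∈ Algebra.adjoin R ((𝒜 0 : Set A) ∪ 𝒜 (D + 1)!) := by
  induction ν using Nat.strong_induction_on generalizing s with
  | _ ν ih =>
  have hmem : ∏ i ∈ s, g i ∈ 𝒜 ((D + 1)! * ν) := hs ▸ SetLike.prod_mem_graded 𝒜 e g hg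
  match ν with
  | 0 => exact Algebra.subset_adjoin (Or.inl (by simpa using hmem))
  | 1 => exact Algebra.subset_adjoin (Or.inr (by simpa using hmem))
  | ν + 2 =>
    obtain ⟨t, hts, ht⟩ := exists_subset_sum_eq_mul_factorial he (D + 1)
      (by rw [hs, ← factorial_succ]; nlinarith)
    rw [← factorial_succ] at ht
    have hsplit := sum_sdiff hts (f := e)
    rw [← prod_sdiff hts]
    refine mul_mem (ih (ν + 1) (by omega) (fun i hi => hg i (sdiff_subset hi))
      (fun i hi => he i (sdiff_subset hi)) (by rw [ht, hs] at hsplit; linarith))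
      (ih 1 (by omega) (fun i hi => hg i (hts hi)) (fun i hi => he i (hts hi))
        (by rw [ht, mul_one]))

theorem mem_adjoin_zero_union_factorial {D ν : ℕ}
    (hD : Algebra.adjoin R (⋃ i ≤ D, (𝒜 i : Set A)) = ⊤) {y : A} (hy : y ∈ 𝒜 ((D + 1)! * ν)) :
    y ∈ Algebra.adjoin R ((𝒜 0 : Set A) ∪ 𝒜 (D + 1)!) := by
  set S := Algebra.adjoin R ((𝒜 0 : Set A) ∪ 𝒜 (D + 1)!)
  have hproj : Submodule.span R (Submonoid.closure (⋃ i ≤ D, (𝒜 i : Set A)) : Set A) ≤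
      (Subalgebra.toSubmodule S).comap (GradedAlgebra.proj 𝒜 ((D + 1)! * ν)) := by
    refine Submodule.span_le.2 fun w hw => ?_
    obtain ⟨n, g, e, hg, rfl⟩ := Submonoid.exists_fin_prod_eq_of_mem_closure_iUnion hw
    simp only [Set.mem_iUnion] at hg
    have hmem := SetLike.prod_mem_graded 𝒜 e g (F := univ) fun k _ => (hg k).2
    by_cases hdeg : ∑ k, e k = (D + 1)! * ν
    · rw [hdeg] at hmem
      rw [SetLike.mem_coe, Submodule.mem_comap, proj_apply,
        DirectSum.decompose_of_mem_same 𝒜 hmem]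
      exact prod_mem_adjoin_zero_union_factorial 𝒜 (fun k _ => (hg k).2) (fun k _ => (hg k).1) hdeg
    · rw [SetLike.mem_coe, Submodule.mem_comap, proj_apply,
        DirectSum.decompose_of_mem_ne 𝒜 hmem hdeg]
      exact zero_mem S
  have hy' : y ∈ Submodule.span R (Submonoid.closure (⋃ i ≤ D, (𝒜 i : Set A)) : Set A) := by
    rw [← Algebra.adjoin_eq_span, hD]; trivial
  simpa [proj_apply, DirectSum.decompose_of_mem_same 𝒜 hy] using hproj hy'

end GradedAlgebra

/-- Bourbaki: if a positively graded commutative ring `A` is finitely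
generated as an `A_0`-algebra, then there is `d > 0` such that the Veronese subring
`A^{(d)}` is generated over `A_0` by `A_d`. -/
theorem stmt13 {R A : Type*} [CommRing R] [CommRing A] [Algebra R A]
    (𝒜 : ℕ → Submodule R A) [GradedAlgebra 𝒜]
    (hfg : ∃ s : Finset A, Algebra.adjoin R ((𝒜 0 : Set A) ∪ ↑s) = ⊤) :
    ∃ d : ℕ, 0 < d ∧
      Algebra.adjoin R ((𝒜 0 : Set A) ∪ (𝒜 d : Set A))
        = Algebra.adjoin R (⋃ ν : ℕ, (𝒜 (d * ν) : Set A)) := by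
  obtain ⟨s, hs⟩ := hfg
  obtain ⟨D, hD⟩ := GradedAlgebra.exists_adjoin_iUnion_le_eq_top 𝒜 hs
  refine ⟨(D + 1)!, factorial_pos _, le_antisymm (Algebra.adjoin_mono ?_) ?_⟩
  · exact Set.union_subset (Set.subset_iUnion_of_subset 0 (by simp))
      (Set.subset_iUnion_of_subset 1 (by simp))
  · exact Algebra.adjoin_le (Set.iUnion_subset fun ν y hy =>
      GradedAlgebra.mem_adjoin_zero_union_factorial 𝒜 hD hy)
end
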